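/- Let a₁, a₂, b ∈ ℝ with a₁ ≠ a₂, γ₁, γ₂ > 0, σ_b = √(2/(1+4b²)), and let x(t) = √γ₁ e^{2iπt(a₁+bt)} + √γ₂ e^{2iπt(a₂+bt)}. For z = τ+iω ∈ ℂ set a = (σ_b/√2)(a₂−a₁), r = (σ_b/√2)(ω − 2bτ − a₁), and s = (σ_b/√2)(τ + 2bω − (a₁+a₂)b). Then Spec(x)(z) = 0 if and only if r = a/2 − log(γ₂/γ₁)/(4aπ) and as − 1/2 ∈ ℤ. -/

import Mathlib

/-!
Against the Gaussian window, each chirp becomes a Gaussian with a complex quadratic exponent,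
so the Gabor transform of the `j`-th chirp is `exp Eⱼ` with `Eⱼ = chirpPhase aⱼ b τ ω`, up to
a nonzero factor that is the same for both chirps. Hence `Spec x z = 0` exactly when
`√γ₁ e^{E₁} + √γ₂ e^{E₂} = 0`, that is, `e^{E₂ - E₁} = -√(γ₁/γ₂)`. In the rotated coordinates,
`E₂ - E₁ = π a (2r - a) + 2π a s i`, so the real part of this equation determines `r` and the
imaginary part says that `a s` is a half-odd integer.
-/

open Real MeasureTheory

noncomputable def Spec (y : ℝ → ℂ) (z : ℂ) : ℝ :=
  ‖∫ t : ℝ, y t * (((2 : ℝ) ^ ((1 : ℝ) / 4) : ℝ) : ℂ)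
    * Complex.exp (-(π : ℂ) * ((t : ℂ) - (z.re : ℂ)) ^ 2)
    * Complex.exp (-2 * (π : ℂ) * Complex.I * (z.im : ℂ) * (t : ℂ))‖ ^ 2

section GaussianSTFT

open Complex

noncomputable def gaussianSTFT (y : ℝ → ℂ) (z : ℂ) : ℂ :=
  ∫ t : ℝ, y t * (((2 : ℝ) ^ ((1 : ℝ) / 4) : ℝ) : ℂ)
    * cexp (-(π : ℂ) * ((t : ℂ) - (z.re : ℂ)) ^ 2)
    * cexp (-2 * (π : ℂ) * I * (z.im : ℂ) * (t : ℂ))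

theorem spec_eq_zero_iff (y : ℝ → ℂ) (z : ℂ) : Spec y z = 0 ↔ gaussianSTFT y z = 0 := by
  rw [Spec, ← gaussianSTFT, sq_eq_zero_iff, norm_eq_zero]

noncomputable def chirp (α b t : ℝ) : ℂ := cexp (2 * π * I * t * (α + b * t))

theorem one_sub_two_mul_ofReal_mul_I_ne_zero (b : ℝ) : (1 : ℂ) - 2 * b * I ≠ 0 :=
  fun h => by simpa using congrArg re h

theorem re_neg_pi_mul_one_sub_two_mul_ofReal_mul_I_lt_zero (b : ℝ) :
    (-π * (1 - 2 * b * I)).re < 0 := by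
  simp [pi_pos]

theorem chirp_mul_gaussianWindow (α b τ ω t : ℝ) :
    chirp α b t * cexp (-π * (t - τ) ^ 2) * cexp (-2 * π * I * ω * t) =
      cexp (-π * (1 - 2 * b * I) * t ^ 2 + 2 * π * (τ + (α - ω) * I) * t + -π * τ ^ 2) := by
  rw [chirp, ← Complex.exp_add, ← Complex.exp_add]
  ring_nf

theorem integrable_chirp_mul_gaussianWindow (α b : ℝ) (z : ℂ) :
    Integrable fun t : ℝ => chirp α b t * (((2 : ℝ) ^ ((1 : ℝ) / 4) : ℝ) : ℂ)
      * cexp (-(π : ℂ) * ((t : ℂ) - (z.re : ℂ)) ^ 2)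
      * cexp (-2 * (π : ℂ) * I * (z.im : ℂ) * (t : ℂ)) := by
  refine ((integrable_cexp_quadratic' (re_neg_pi_mul_one_sub_two_mul_ofReal_mul_I_lt_zero b)
    (2 * π * (z.re + (α - z.im) * I)) (-π * z.re ^ 2)).const_mul
    (((2 : ℝ) ^ ((1 : ℝ) / 4) : ℝ) : ℂ)).congr (Filter.Eventually.of_forall fun t => ?_)
  simp only [← chirp_mul_gaussianWindow]
  ring

-- The exponent `d - c ^ 2 / (4 * b)` of `integral_cexp_quadratic` for the quadratic exponent
-- in `chirp_mul_gaussianWindow`.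
noncomputable def chirpPhase (α b τ ω : ℝ) : ℂ :=
  π * ((τ + (α - ω) * I) ^ 2 / (1 - 2 * b * I) - τ ^ 2)

theorem gaussianSTFT_chirp (α b : ℝ) (z : ℂ) :
    gaussianSTFT (chirp α b) z = (((2 : ℝ) ^ ((1 : ℝ) / 4) : ℝ) : ℂ) *
      ((1 - 2 * b * I)⁻¹ ^ (1 / 2 : ℂ) * cexp (chirpPhase α b z.re z.im)) := by
  calc gaussianSTFT (chirp α b) z
      = ∫ t : ℝ, (((2 : ℝ) ^ ((1 : ℝ) / 4) : ℝ) : ℂ) * cexp (-π * (1 - 2 * b * I) * t ^ 2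
          + 2 * π * (z.re + (α - z.im) * I) * t + -π * z.re ^ 2) := by
        refine integral_congr_ae (Filter.Eventually.of_forall fun t => ?_)
        simp only [← chirp_mul_gaussianWindow]
        ring
    _ = _ := by
        rw [integral_const_mul,
          integral_cexp_quadratic (re_neg_pi_mul_one_sub_two_mul_ofReal_mul_I_lt_zero b),
          chirpPhase]
        congr 3
        · field_simp
        · field_simp
          ring

theorem gaussianSTFT_add_chirps (c₁ c₂ : ℂ) (α₁ α₂ b : ℝ) (z : ℂ) :
    gaussianSTFT (fun t => c₁ * chirp α₁ b t + c₂ * chirp α₂ b t) z =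
      c₁ * gaussianSTFT (chirp α₁ b) z + c₂ * gaussianSTFT (chirp α₂ b) z := by
  rw [gaussianSTFT, gaussianSTFT, gaussianSTFT, ← integral_const_mul, ← integral_const_mul,
    ← integral_add ((integrable_chirp_mul_gaussianWindow α₁ b z).const_mul c₁)
      ((integrable_chirp_mul_gaussianWindow α₂ b z).const_mul c₂)]
  congr 1 with t
  ring

theorem gaussianSTFT_add_chirps_eq_zero_iff (c₁ c₂ : ℂ) (α₁ α₂ b : ℝ) (z : ℂ) :
    gaussianSTFT (fun t => c₁ * chirp α₁ b t + c₂ * chirp α₂ b t) z = 0 ↔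
      c₁ * cexp (chirpPhase α₁ b z.re z.im) + c₂ * cexp (chirpPhase α₂ b z.re z.im) = 0 := by
  have hK : (((2 : ℝ) ^ ((1 : ℝ) / 4) : ℝ) : ℂ) ≠ 0 := by
    exact_mod_cast (Real.rpow_pos_of_pos two_pos _).ne'
  have hP : (1 - 2 * b * I)⁻¹ ^ (1 / 2 : ℂ) ≠ 0 := by
    simp [cpow_eq_zero_iff, one_sub_two_mul_ofReal_mul_I_ne_zero]
  rw [gaussianSTFT_add_chirps, gaussianSTFT_chirp, gaussianSTFT_chirp]
  simp only [mul_left_comm c₁, mul_left_comm c₂, ← mul_add, mul_eq_zero, hK, hP, false_or]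

theorem chirpPhase_sub_chirpPhase {α₁ α₂ b τ ω k a r s : ℝ} (hk : k ^ 2 * (1 + 4 * b ^ 2) = 1)
    (ha : a = k * (α₂ - α₁)) (hr : r = k * (ω - 2 * b * τ - α₁))
    (hs : s = k * (τ + 2 * b * ω - (α₁ + α₂) * b)) :
    chirpPhase α₂ b τ ω - chirpPhase α₁ b τ ω = π * a * (2 * r - a) + 2 * π * a * s * I := by
  rw [chirpPhase, chirpPhase, ← mul_sub, sub_sub_sub_cancel_right, ← sub_div, mul_div_assoc',
    div_eq_iff (one_sub_two_mul_ofReal_mul_I_ne_zero b)]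
  subst ha hr hs
  apply Complex.ext <;>
    simp only [sq, mul_re, mul_im, add_re, add_im, sub_re, sub_im, ofReal_re, ofReal_im, I_re, I_im,
      one_re, one_im, re_ofNat, im_ofNat, ofReal_mul, ofReal_sub, ofReal_add, ofReal_ofNat,
      mul_zero, mul_one, zero_mul, add_zero, zero_add, sub_zero, zero_sub, sub_self, mul_neg,
      sub_neg_eq_add, sub_sub_sub_cancel_left]
  · linear_combination (-π * (α₂ - α₁) * (2 * ω - α₁ - α₂)) * hk
  · linear_combination (-2 * π * (α₂ - α₁) * τ) * hk

theorem exp_eq_neg_ofReal_iff {w : ℂ} {c : ℝ} (hc : 0 < c) :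
    cexp w = -c ↔ w.re = Real.log c ∧ ∃ n : ℤ, w.im = (2 * n + 1) * π := by
  have hneg : (-c : ℂ) = cexp (Real.log c + π * I) := by
    rw [Complex.exp_add, exp_pi_mul_I, ← ofReal_exp, Real.exp_log hc, mul_neg_one]
  rw [hneg, exp_eq_exp_iff_exists_int]
  simp only [Complex.ext_iff, add_re, add_im, mul_re, mul_im, ofReal_re, ofReal_im, I_re, I_im,
    intCast_re, intCast_im, re_ofNat, im_ofNat, mul_zero, mul_one, zero_mul, sub_self, sub_zero,
    add_zero, zero_add, exists_and_left, and_congr_right_iff]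
  exact fun _ => exists_congr fun n => by constructor <;> intro h <;> linear_combination h

theorem ofReal_mul_exp_add_ofReal_mul_exp_eq_zero_iff {g₁ g₂ : ℝ} (hg₁ : 0 < g₁) (hg₂ : 0 < g₂)
    (E₁ E₂ : ℂ) :
    g₁ * cexp E₁ + g₂ * cexp E₂ = 0 ↔
      (E₂ - E₁).re = Real.log (g₁ / g₂) ∧ ∃ n : ℤ, (E₂ - E₁).im = (2 * n + 1) * π := by
  have hg₂' : (g₂ : ℂ) ≠ 0 := ofReal_ne_zero.2 hg₂.ne'
  rw [← exp_eq_neg_ofReal_iff (div_pos hg₁ hg₂), Complex.exp_sub,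
    div_eq_iff (Complex.exp_ne_zero _), ofReal_div]
  constructor <;> intro h
  · field_simp
    linear_combination h
  · rw [h]
    field_simp
    ring

end GaussianSTFT

/-- The spectrogram of a pair of distinct parallel linear chirps
`x(t) = √γ₁ e^{2iπt(a₁+bt)} + √γ₂ e^{2iπt(a₂+bt)}` vanishes at `z` exactly when, in the
rotated coordinates, `r = a/2 − log(γ₂/γ₁)/(4aπ)` and `as − 1/2 ∈ ℤ`. -/
theorem spec_pair_of_chirps_eq_zero_iff (a₁ a₂ b γ₁ γ₂ : ℝ) (hne : a₁ ≠ a₂)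
    (hγ₁ : 0 < γ₁) (hγ₂ : 0 < γ₂)
    (σ : ℝ) (hσ : σ = Real.sqrt (2 / (1 + 4 * b ^ 2)))
    (x : ℝ → ℂ)
    (hx : ∀ t : ℝ, x t =
      (Real.sqrt γ₁ : ℂ) * Complex.exp (2 * (π : ℂ) * Complex.I * (t : ℂ)
        * ((a₁ : ℂ) + (b : ℂ) * (t : ℂ)))
      + (Real.sqrt γ₂ : ℂ) * Complex.exp (2 * (π : ℂ) * Complex.I * (t : ℂ)
        * ((a₂ : ℂ) + (b : ℂ) * (t : ℂ))))
    (z : ℂ) (a r s : ℝ)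
    (ha : a = σ / Real.sqrt 2 * (a₂ - a₁))
    (hr : r = σ / Real.sqrt 2 * (z.im - 2 * b * z.re - a₁))
    (hs : s = σ / Real.sqrt 2 * (z.re + 2 * b * z.im - (a₁ + a₂) * b)) :
    Spec x z = 0 ↔
      (r = a / 2 - Real.log (γ₂ / γ₁) / (4 * a * π) ∧ ∃ m : ℤ, a * s - 1 / 2 = (m : ℝ)) := by
  have hk : (σ / Real.sqrt 2) ^ 2 * (1 + 4 * b ^ 2) = 1 := by
    rw [hσ, div_pow, Real.sq_sqrt (by positivity), Real.sq_sqrt zero_le_two]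
    field_simp
  have ha₀ : a ≠ 0 := by
    rw [ha]
    refine mul_ne_zero (fun h => ?_) (sub_ne_zero.2 hne.symm)
    simp [h] at hk
  have hlog : Real.log (Real.sqrt γ₁ / Real.sqrt γ₂) = -Real.log (γ₂ / γ₁) / 2 := by
    rw [← Real.sqrt_div' _ hγ₂.le, Real.log_sqrt (div_pos hγ₁ hγ₂).le, ← Real.log_inv, inv_div]
  have hchirps :
      x = fun t => (Real.sqrt γ₁ : ℂ) * chirp a₁ b t + (Real.sqrt γ₂ : ℂ) * chirp a₂ b t :=
    funext hx
  rw [spec_eq_zero_iff, hchirps, gaussianSTFT_add_chirps_eq_zero_iff,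
    ofReal_mul_exp_add_ofReal_mul_exp_eq_zero_iff (Real.sqrt_pos.2 hγ₁) (Real.sqrt_pos.2 hγ₂),
    chirpPhase_sub_chirpPhase hk ha hr hs, hlog]
  simp only [Complex.add_re, Complex.add_im, Complex.mul_re, Complex.mul_im, Complex.sub_re,
    Complex.sub_im, Complex.ofReal_re, Complex.ofReal_im, Complex.I_re, Complex.I_im,
    Complex.re_ofNat, Complex.im_ofNat]
  refine and_congr ?_ (exists_congr fun m => ?_)
  · field_simp
    constructor <;> intro h <;> linarith
  · constructor <;> intro h
    · refine mul_left_cancel₀ two_pi_pos.ne' ?_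
      linear_combination h
    · linear_combination 2 * π * h
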